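/- Let κ ∈ Γ_k ⊂ ℝⁿ with κ_1 ≥ ⋯ ≥ κ_n and suppose κ_n ≤ −δ κ_1 for some δ ∈ (0,1). Then Σ_i σ_{k-1}(κ|i) κ_i² ≥ C(n,k) δ² κ_1² Σ_i σ_{k-1}(κ|i) for a positive constant C(n,k) depending only on n and k. -/

import Mathlib

/-!
Write `a_i = σ_{k-1}(κ|i)`. The identity `∑ a_i = (n - k + 1) σ_{k-1}(κ)` and
`σ_{k-1}(κ) ≤ a_n` (peel off the entry `κ_n ≤ 0`) give `∑ a_i ≤ n a_n`, so with `C = 1/n` the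
claim follows from `δ² κ_1² ≤ κ_n²` and `κ_n² a_n ≤ ∑ a_i κ_i²`, once every `a_i ≥ 0`.

That positivity, `κ ∈ Γ_k ⇒ σ_{k-1}(κ|i) > 0`, is proved by induction on `k`. If it failed,
move `κ` along `κ + c𝟙`, which stays in `Γ_k`, until `σ_{k-1}(κ|i)` vanishes. Then
`x = κ|i` has `σ_k(x) = σ_k(κ) > 0` and `σ_{k-1}(x) = 0`, so the identity
`∑_m x_m σ_{k-1}(x|m) = k σ_k(x)` becomes `k σ_k(x) = -∑_m x_m² σ_{k-2}(x|m) ≤ 0`, where the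
sign comes from the induction hypothesis applied to `x + ε𝟙 ∈ Γ_{k-1}` and `ε → 0`.
-/

noncomputable def esymm (n k : ℕ) (κ : Fin n → ℝ) : ℝ :=
  ∑ s ∈ Finset.powersetCard k Finset.univ, ∏ i ∈ s, κ i

open Finset

theorem Multiset.esymm_cons_succ {R : Type*} [CommSemiring R] (a : R) (s : Multiset R) (j : ℕ) :
    (a ::ₘ s).esymm (j + 1) = s.esymm (j + 1) + a * s.esymm j := by
  simp [Multiset.esymm, Multiset.powersetCard_cons, Multiset.sum_map_mul_left]

section Algebra

variable {ι R : Type*} [CommRing R]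

/-- `σ_j` of the entries of `κ` indexed by `A`; the paper's `σ_j(κ|i)` is
`esymmOn (A.erase i) j κ`. -/
def esymmOn (A : Finset ι) (j : ℕ) (κ : ι → R) : R :=
  ∑ s ∈ A.powersetCard j, ∏ i ∈ s, κ i

@[simp] lemma esymmOn_zero (A : Finset ι) (κ : ι → R) : esymmOn A 0 κ = 1 := by
  simp [esymmOn]

lemma esymmOn_eq_zero_of_card_lt {A : Finset ι} {j : ℕ} (h : #A < j) (κ : ι → R) :
    esymmOn A j κ = 0 := by
  simp [esymmOn, powersetCard_eq_empty.2 h]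

lemma esymmOn_congr {A : Finset ι} {j : ℕ} {κ κ' : ι → R} (h : ∀ i ∈ A, κ i = κ' i) :
    esymmOn A j κ = esymmOn A j κ' :=
  sum_congr rfl fun _ hs => prod_congr rfl fun i hi => h i ((mem_powersetCard.1 hs).1 hi)

lemma esymmOn_add_const (A : Finset ι) (j : ℕ) (κ : ι → R) (c : R) :
    esymmOn A j (fun i => κ i + c) =
      ∑ m ∈ range (j + 1), (#A - m).choose (j - m) • (c ^ (j - m) * esymmOn A m κ) := by
  classical
  have hprod (S) (hS : S ∈ A.powersetCard j) : ∏ i ∈ S, (κ i + c) =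
      ∑ m ∈ range (j + 1), ∑ B ∈ S.powersetCard m, c ^ (j - m) * ∏ i ∈ B, κ i := by
    obtain ⟨-, hSj⟩ := mem_powersetCard.1 hS
    rw [prod_add, sum_powerset, hSj]
    refine sum_congr rfl fun m _ => sum_congr rfl fun B hB => ?_
    obtain ⟨hBS, hBm⟩ := mem_powersetCard.1 hB
    rw [prod_const, card_sdiff_of_subset hBS, hSj, hBm, mul_comm]
  rw [esymmOn, sum_congr rfl hprod, sum_comm]
  refine sum_congr rfl fun m hm => ?_
  have hmj : m ≤ j := Nat.lt_succ_iff.1 (mem_range.1 hm)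
  rw [esymmOn, mul_sum, smul_sum,
    sum_comm' (t' := A.powersetCard m) (s' := fun B => (A.powersetCard j).filter (B ⊆ ·))]
  · refine sum_congr rfl fun B hB => ?_
    obtain ⟨hBA, hBm⟩ := mem_powersetCard.1 hB
    rw [sum_const, card_filter_powersetCard_subset B A j hBA (hBm ▸ hmj), hBm]
  · intro S B
    simp only [mem_powersetCard, mem_filter]
    constructor
    · rintro ⟨⟨hSA, hSj⟩, hBS, hBm⟩
      exact ⟨⟨⟨hSA, hSj⟩, hBS⟩, hBS.trans hSA, hBm⟩
    · rintro ⟨⟨⟨hSA, hSj⟩, hBS⟩, -, hBm⟩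
      exact ⟨⟨hSA, hSj⟩, hBS, hBm⟩

variable [DecidableEq ι]

lemma esymmOn_succ_of_mem {A : Finset ι} {i : ι} (hi : i ∈ A) (j : ℕ) (κ : ι → R) :
    esymmOn A (j + 1) κ = esymmOn (A.erase i) (j + 1) κ + κ i * esymmOn (A.erase i) j κ := by
  simp only [esymmOn, ← esymm_map_val, erase_val, ← Multiset.esymm_cons_succ, ← Multiset.map_cons,
    Multiset.cons_erase hi]

lemma sum_esymmOn_erase (A : Finset ι) (j : ℕ) (κ : ι → R) :
    ∑ i ∈ A, esymmOn (A.erase i) j κ = (#A - j) • esymmOn A j κ := by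
  simp only [esymmOn, smul_sum]
  rw [sum_comm' (t' := A.powersetCard j) (s' := fun s => A \ s)]
  · refine sum_congr rfl fun s hs => ?_
    rw [sum_const, card_sdiff_of_subset (mem_powersetCard.1 hs).1, (mem_powersetCard.1 hs).2]
  · intro i s
    simp only [mem_powersetCard, mem_sdiff, subset_erase]
    tauto

lemma sum_mul_esymmOn_erase (A : Finset ι) (j : ℕ) (κ : ι → R) :
    ∑ i ∈ A, κ i * esymmOn (A.erase i) j κ = (j + 1) • esymmOn A (j + 1) κ := by
  rcases lt_or_ge #A (j + 1) with hA | hA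
  · rw [esymmOn_eq_zero_of_card_lt hA, smul_zero]
    exact sum_eq_zero fun i hi => by
      rw [esymmOn_eq_zero_of_card_lt ((card_erase_lt_of_mem hi).trans_le (by omega)), mul_zero]
  have h (i) (hi : i ∈ A) :
      κ i * esymmOn (A.erase i) j κ = esymmOn A (j + 1) κ - esymmOn (A.erase i) (j + 1) κ := by
    rw [esymmOn_succ_of_mem hi]; ring
  rw [sum_congr rfl h, sum_sub_distrib, sum_esymmOn_erase, sum_const, sub_eq_iff_eq_add,
    ← add_nsmul]
  congr 1
  omega

lemma esymmOn_update_zero {A : Finset ι} {i : ι} (hi : i ∈ A) (j : ℕ) (κ : ι → R) :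
    esymmOn A j (Function.update κ i 0) = esymmOn (A.erase i) j κ := by
  rcases j with _ | j
  · simp
  rw [esymmOn_succ_of_mem hi, Function.update_self, zero_mul, add_zero]
  exact esymmOn_congr fun m hm => Function.update_of_ne (ne_of_mem_erase hm) 0 κ

end Algebra

section GardingCone

variable {ι : Type*}

/-- The paper's `Γ_k`, for the entries indexed by `A`. -/
def gardingCone (A : Finset ι) (k : ℕ) : Set (ι → ℝ) :=
  {κ | ∀ j, 1 ≤ j → j ≤ k → 0 < esymmOn A j κ}

lemma gardingCone_anti (A : Finset ι) : Antitone (gardingCone A) :=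
  fun _ _ hkl _ hκ j hj1 hj2 => hκ j hj1 (hj2.trans hkl)

lemma esymmOn_nonneg_of_mem_gardingCone {A : Finset ι} {k j : ℕ} {κ : ι → ℝ}
    (hκ : κ ∈ gardingCone A k) (hj : j ≤ k) : 0 ≤ esymmOn A j κ := by
  rcases j with _ | j
  · simp
  · exact (hκ (j + 1) (by omega) hj).le

lemma le_card_of_mem_gardingCone {A : Finset ι} {k : ℕ} {κ : ι → ℝ}
    (hκ : κ ∈ gardingCone A k) : k ≤ #A := by
  by_contra! hk
  have hpos := hκ k (by omega) le_rfl
  rw [esymmOn_eq_zero_of_card_lt hk] at hpos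
  exact hpos.false

lemma esymmOn_pos {A : Finset ι} {j : ℕ} {κ : ι → ℝ} (hκ : ∀ i ∈ A, 0 < κ i) (hj : j ≤ #A) :
    0 < esymmOn A j κ :=
  sum_pos (fun _ hs => prod_pos fun i hi => hκ i ((mem_powersetCard.1 hs).1 hi))
    (powersetCard_nonempty.2 hj)

lemma continuous_esymmOn_add_const (A : Finset ι) (j : ℕ) (κ : ι → ℝ) :
    Continuous fun c : ℝ => esymmOn A j (fun i => κ i + c) := by
  unfold esymmOn
  fun_prop

lemma choose_mul_pow_mul_esymmOn_le_esymmOn_add_const {A : Finset ι} {j m : ℕ} {κ : ι → ℝ}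
    {c : ℝ} (hc : 0 ≤ c) (hκ : ∀ l ≤ j, 0 ≤ esymmOn A l κ) (hm : m ≤ j) :
    (#A - m).choose (j - m) * (c ^ (j - m) * esymmOn A m κ) ≤
      esymmOn A j (fun i => κ i + c) := by
  rw [esymmOn_add_const, ← nsmul_eq_mul]
  refine single_le_sum (f := fun l => (#A - l).choose (j - l) • (c ^ (j - l) * esymmOn A l κ))
    (fun l hl => ?_) (mem_range.2 (by omega))
  have := hκ l (by simpa [Nat.lt_succ_iff] using hl)
  positivity

lemma add_const_mem_gardingCone {A : Finset ι} {k : ℕ} {κ : ι → ℝ} {c : ℝ}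
    (hκ : κ ∈ gardingCone A k) (hc : 0 ≤ c) : (fun i => κ i + c) ∈ gardingCone A k := by
  intro j hj1 hjk
  have := choose_mul_pow_mul_esymmOn_le_esymmOn_add_const hc
    (fun l hl => esymmOn_nonneg_of_mem_gardingCone hκ (hl.trans hjk)) le_rfl
  simp only [Nat.sub_self, Nat.choose_zero_right, Nat.cast_one, pow_zero, one_mul] at this
  exact (hκ j hj1 hjk).trans_le this

lemma add_pos_const_mem_gardingCone {A : Finset ι} {k : ℕ} {κ : ι → ℝ} {c : ℝ}
    (hk : k ≤ #A) (hκ : ∀ j, 1 ≤ j → j ≤ k → 0 ≤ esymmOn A j κ) (hc : 0 < c) :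
    (fun i => κ i + c) ∈ gardingCone A k := by
  intro j hj1 hjk
  have hnonneg (l) (hl : l ≤ j) : 0 ≤ esymmOn A l κ := by
    rcases l with _ | l
    · simp
    · exact hκ (l + 1) (by omega) (hl.trans hjk)
  have := choose_mul_pow_mul_esymmOn_le_esymmOn_add_const hc.le hnonneg (Nat.zero_le j)
  simp only [Nat.sub_zero, esymmOn_zero, mul_one] at this
  have hchoose : (0 : ℝ) < (#A).choose j := by exact_mod_cast Nat.choose_pos (hjk.trans hk)
  exact (by positivity : (0 : ℝ) < (#A).choose j * c ^ j).trans_le this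

lemma exists_nonneg_esymmOn_add_const_eq_zero {A : Finset ι} {j : ℕ} {κ : ι → ℝ}
    (hj : j ≤ #A) (h : esymmOn A j κ ≤ 0) :
    ∃ c, 0 ≤ c ∧ esymmOn A j (fun i => κ i + c) = 0 := by
  set M := 1 + ∑ i ∈ A, |κ i|
  have hM : 0 < esymmOn A j (fun i => κ i + M) := by
    refine esymmOn_pos (fun i hi => ?_) hj
    have := single_le_sum (fun l _ => abs_nonneg (κ l)) hi
    have := neg_abs_le (κ i)
    linarith
  obtain ⟨c, hc, hc0⟩ := intermediate_value_Icc (by positivity : (0 : ℝ) ≤ M)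
    (continuous_esymmOn_add_const A j κ).continuousOn ⟨by simpa using h, hM.le⟩
  exact ⟨c, hc.1, hc0⟩

lemma esymmOn_nonneg_of_forall_add_const_pos {A : Finset ι} {j : ℕ} {κ : ι → ℝ}
    (h : ∀ ε > 0, 0 < esymmOn A j (fun i => κ i + ε)) : 0 ≤ esymmOn A j κ := by
  have hlim := ((continuous_esymmOn_add_const A j κ).tendsto 0).mono_left
    (nhdsWithin_le_nhds (s := Set.Ioi 0))
  simp only [add_zero] at hlim
  exact ge_of_tendsto hlim (eventually_nhdsWithin_of_forall fun ε hε => (h ε hε).le)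

variable [DecidableEq ι]

lemma esymmOn_add_two_nonpos {A : Finset ι} {j : ℕ} {κ : ι → ℝ}
    (h0 : esymmOn A (j + 1) κ = 0) (h : ∀ i ∈ A, 0 ≤ esymmOn (A.erase i) j κ) :
    esymmOn A (j + 2) κ ≤ 0 := by
  have hterm (i) (hi : i ∈ A) :
      κ i * esymmOn (A.erase i) (j + 1) κ = -(κ i ^ 2 * esymmOn (A.erase i) j κ) := by
    have := esymmOn_succ_of_mem hi j κ
    rw [h0] at this
    linear_combination (-κ i) * this
  have hsum := sum_mul_esymmOn_erase A (j + 1) κ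
  rw [sum_congr rfl hterm, sum_neg_distrib, nsmul_eq_mul] at hsum
  have : 0 ≤ ∑ i ∈ A, κ i ^ 2 * esymmOn (A.erase i) j κ :=
    sum_nonneg fun i hi => mul_nonneg (sq_nonneg _) (h i hi)
  push_cast at hsum
  nlinarith

theorem esymmOn_erase_pos_of_mem_gardingCone (k : ℕ) {A : Finset ι} {κ : ι → ℝ} {i : ι}
    (hκ : κ ∈ gardingCone A (k + 1)) (hi : i ∈ A) : 0 < esymmOn (A.erase i) k κ := by
  induction k using Nat.strong_induction_on generalizing A κ i with
  | _ k IH =>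
  rcases k with _ | k
  · simp
  have hcard : k + 1 ≤ #(A.erase i) := by
    have := le_card_of_mem_gardingCone hκ
    rw [card_erase_of_mem hi]
    omega
  by_contra! hneg
  obtain ⟨c, hc, hzero⟩ := exists_nonneg_esymmOn_add_const_eq_zero hcard hneg
  set ν := fun x => κ x + c
  have hν : ν ∈ gardingCone A (k + 2) := add_const_mem_gardingCone hκ hc
  have htop : 0 < esymmOn (A.erase i) (k + 2) ν := by
    have := esymmOn_succ_of_mem hi (k + 1) ν
    rw [hzero, mul_zero, add_zero] at this
    exact this ▸ hν (k + 2) (by omega) le_rfl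
  have hboundary (m) (hm : m ∈ A.erase i) : 0 ≤ esymmOn ((A.erase i).erase m) k ν := by
    refine esymmOn_nonneg_of_forall_add_const_pos fun ε hε => IH k (by omega) ?_ hm
    refine add_pos_const_mem_gardingCone hcard (fun j hj1 hj2 => ?_) hε
    rcases hj2.lt_or_eq with hj | rfl
    · exact (IH j (by omega) (gardingCone_anti A (by omega) hν) hi).le
    · exact hzero.ge
  exact (esymmOn_add_two_nonpos hzero hboundary).not_gt htop

lemma esymmOn_le_esymmOn_erase {A : Finset ι} {i : ι} {κ : ι → ℝ} (hi : i ∈ A) (hκi : κ i ≤ 0)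
    {m : ℕ} (h : ∀ j < m, 0 ≤ esymmOn A j κ) : esymmOn A m κ ≤ esymmOn (A.erase i) m κ := by
  induction m with
  | zero => simp
  | succ m ih =>
    have hm := (h m m.lt_succ_self).trans (ih fun j hj => h j (hj.trans m.lt_succ_self))
    rw [esymmOn_succ_of_mem hi]
    nlinarith

lemma sq_mul_sum_esymmOn_erase_le {A : Finset ι} {k : ℕ}
    {κ : ι → ℝ} {i : ι} (hκ : κ ∈ gardingCone A (k + 1)) (hi : i ∈ A) (hκi : κ i ≤ 0) :
    κ i ^ 2 * ∑ m ∈ A, esymmOn (A.erase m) k κ ≤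
      #A * ∑ m ∈ A, esymmOn (A.erase m) k κ * κ m ^ 2 := by
  have hpos (m) (hm : m ∈ A) := esymmOn_erase_pos_of_mem_gardingCone k hκ hm
  have hsum : ∑ m ∈ A, esymmOn (A.erase m) k κ ≤ #A * esymmOn (A.erase i) k κ := by
    have hσ := esymmOn_nonneg_of_mem_gardingCone hκ k.le_succ
    have hle : esymmOn A k κ ≤ esymmOn (A.erase i) k κ :=
      esymmOn_le_esymmOn_erase hi hκi fun j hj => esymmOn_nonneg_of_mem_gardingCone hκ (by omega)
    rw [sum_esymmOn_erase, nsmul_eq_mul]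
    calc ((#A - k : ℕ) : ℝ) * esymmOn A k κ ≤ #A * esymmOn A k κ := by
          gcongr
          exact_mod_cast Nat.sub_le _ _
      _ ≤ #A * esymmOn (A.erase i) k κ := by gcongr
  have hsingle : esymmOn (A.erase i) k κ * κ i ^ 2 ≤ ∑ m ∈ A, esymmOn (A.erase m) k κ * κ m ^ 2 :=
    single_le_sum (f := fun m => esymmOn (A.erase m) k κ * κ m ^ 2)
      (fun m hm => mul_nonneg (hpos m hm).le (sq_nonneg _)) hi
  calc κ i ^ 2 * ∑ m ∈ A, esymmOn (A.erase m) k κ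
      ≤ κ i ^ 2 * (#A * esymmOn (A.erase i) k κ) := by gcongr
    _ = #A * (esymmOn (A.erase i) k κ * κ i ^ 2) := by ring
    _ ≤ #A * ∑ m ∈ A, esymmOn (A.erase m) k κ * κ m ^ 2 := by gcongr

end GardingCone

lemma esymm_eq_esymmOn_univ (n j : ℕ) (κ : Fin n → ℝ) : esymm n j κ = esymmOn univ j κ := rfl

/-- If κ ∈ Γ_k is ordered decreasingly and κ_n ≤ −δκ_1 with δ ∈ (0,1), then
    Σ_i σ_{k-1}(κ|i) κ_i² ≥ C(n,k) δ² κ_1² Σ_i σ_{k-1}(κ|i) for some C(n,k) > 0. -/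
theorem stmt16 (n k : ℕ) (hk : 1 ≤ k) (hkn : k ≤ n) :
    ∃ C : ℝ, 0 < C ∧
      ∀ κ : Fin n → ℝ, (∀ i j : Fin n, i ≤ j → κ j ≤ κ i) →
        (∀ j, 1 ≤ j → j ≤ k → 0 < esymm n j κ) →
        ∀ δ : ℝ, 0 < δ → δ < 1 →
          κ ⟨n - 1, by omega⟩ ≤ -δ * κ ⟨0, by omega⟩ →
          C * δ ^ 2 * κ ⟨0, by omega⟩ ^ 2 *
              (∑ i : Fin n, esymm n (k - 1) (Function.update κ i 0))
            ≤ ∑ i : Fin n, esymm n (k - 1) (Function.update κ i 0) * κ i ^ 2 := by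
  have hn : (0 : ℝ) < n := by exact_mod_cast (by omega : 0 < n)
  refine ⟨1 / n, by positivity, fun κ hord hκ δ hδ0 hδ1 hδ => ?_⟩
  obtain ⟨k, rfl⟩ : ∃ k', k = k' + 1 := ⟨k - 1, by omega⟩
  simp only [Nat.add_sub_cancel, esymm_eq_esymmOn_univ, esymmOn_update_zero (mem_univ _)]
  set κ₁ := κ ⟨0, by omega⟩
  set κₙ := κ ⟨n - 1, by omega⟩
  have hκₙκ₁ : κₙ ≤ κ₁ := hord _ _ (Fin.mk_le_mk.2 (Nat.zero_le _))
  have hκₙ : κₙ ≤ 0 := by nlinarith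
  have hsq : δ ^ 2 * κ₁ ^ 2 ≤ κₙ ^ 2 := by
    have h := sq_le_sq' (a := δ * κ₁) (b := -κₙ) (by nlinarith) (by nlinarith)
    rwa [mul_pow, neg_sq] at h
  have hbound := sq_mul_sum_esymmOn_erase_le hκ (mem_univ _) hκₙ
  rw [card_univ, Fintype.card_fin] at hbound
  have hS : 0 ≤ ∑ i : Fin n, esymmOn (univ.erase i) k κ :=
    sum_nonneg fun i _ => (esymmOn_erase_pos_of_mem_gardingCone k hκ (mem_univ i)).le
  calc 1 / (n : ℝ) * δ ^ 2 * κ₁ ^ 2 * ∑ i, esymmOn (univ.erase i) k κ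
      = 1 / n * (δ ^ 2 * κ₁ ^ 2 * ∑ i, esymmOn (univ.erase i) k κ) := by ring
    _ ≤ 1 / n * (κₙ ^ 2 * ∑ i, esymmOn (univ.erase i) k κ) := by gcongr
    _ ≤ 1 / n * (n * ∑ i, esymmOn (univ.erase i) k κ * κ i ^ 2) := by gcongr
    _ = ∑ i, esymmOn (univ.erase i) k κ * κ i ^ 2 := by field_simp
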